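/- Let {k_θ}_{θ ∈ Θ} be a family of kernels on X ⊆ ℝ^d satisfying sup_{θ∈Θ} sup_{x,y∈X} |k_θ(x,y)| ≤ ν and |k_θ(x,y) − k_{θ'}(x,y)| ≤ L₁‖θ−θ'‖. Then for any samples S_P = {x_i}_{i=1}^n and S_Q = {y_i}_{i=1}^n and any θ, θ' ∈ Θ, | σ̂²_{H1,λ}(S_P, S_Q; k_θ) − σ̂²_{H1,λ}(S_P, S_Q; k_{θ'}) | ≤ 256 L₁ ν ‖θ − θ'‖. -/

import Mathlib

/-!
Both `H`-matrices are bounded entrywise by `4ν` and differ entrywise by at most `4 L₁ ‖θ - θ'‖`,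
because `H` is a signed sum of four kernel values and is linear in the kernel. Row sums and the
total sum then satisfy the same bounds scaled by `n` and `n²`, and writing each difference of
squares as `(a - b)(a + b)` bounds each of the two terms of the estimator by `8 · 4ν · 4L₁‖θ - θ'‖`;
the normalisations `4/n³` and `4/n⁴` cancel the powers of `n` exactly.
-/

noncomputable section

/-- `H_ij`-type term for the MMD U-statistic. -/
def Hker {d : ℕ} (k : EuclideanSpace ℝ (Fin d) → EuclideanSpace ℝ (Fin d) → ℝ)
    (x x' y y' : EuclideanSpace ℝ (Fin d)) : ℝ :=
  k x x' + k y y' - k x y' - k x' y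

/-- The regularized variance estimator `σ̂²_{H1,λ}`. -/
def sigmaHat2 {d : ℕ} (n : ℕ) (lam : ℝ)
    (k : EuclideanSpace ℝ (Fin d) → EuclideanSpace ℝ (Fin d) → ℝ)
    (X Y : Fin n → EuclideanSpace ℝ (Fin d)) : ℝ :=
  (4 / (n : ℝ) ^ 3) * ∑ i, (∑ j, Hker k (X i) (X j) (Y i) (Y j)) ^ 2
    - (4 / (n : ℝ) ^ 4) * (∑ i, ∑ j, Hker k (X i) (X j) (Y i) (Y j)) ^ 2 + lam

open Finset

lemma abs_sum_le_card_mul {ι : Type*} [Fintype ι] {f : ι → ℝ} {C : ℝ} (h : ∀ i, |f i| ≤ C) :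
    |∑ i, f i| ≤ Fintype.card ι * C :=
  (abs_sum_le_sum_abs _ _).trans <| (sum_le_sum fun i _ => h i).trans_eq (by simp)

lemma abs_sq_sub_sq_le {a b M e : ℝ} (ha : |a| ≤ M) (hb : |b| ≤ M) (hab : |a - b| ≤ e) :
    |a ^ 2 - b ^ 2| ≤ 2 * M * e := by
  rw [sq_sub_sq, abs_mul]
  exact mul_le_mul ((abs_add_le a b).trans (by linarith)) hab (abs_nonneg _)
    (by linarith [abs_nonneg a])

section VarianceStat

variable {ι : Type*} [Fintype ι]

def varianceStat (H : ι → ι → ℝ) : ℝ :=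
  4 / (Fintype.card ι : ℝ) ^ 3 * ∑ i, (∑ j, H i j) ^ 2
    - 4 / (Fintype.card ι : ℝ) ^ 4 * (∑ i, ∑ j, H i j) ^ 2

theorem abs_varianceStat_sub_le {H H' : ι → ι → ℝ} {B e : ℝ} (hB : 0 ≤ B) (he : 0 ≤ e)
    (hH : ∀ i j, |H i j| ≤ B) (hH' : ∀ i j, |H' i j| ≤ B) (hd : ∀ i j, |H i j - H' i j| ≤ e) :
    |varianceStat H - varianceStat H'| ≤ 16 * B * e := by
  unfold varianceStat
  set N : ℝ := (Fintype.card ι : ℝ)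
  by_cases hN : N = 0
  · simpa [hN] using (by positivity : 0 ≤ 16 * B * e)
  have hrow : ∀ i, |∑ j, H i j| ≤ N * B := fun i => abs_sum_le_card_mul (hH i)
  have hrow' : ∀ i, |∑ j, H' i j| ≤ N * B := fun i => abs_sum_le_card_mul (hH' i)
  have hrowd : ∀ i, |∑ j, H i j - ∑ j, H' i j| ≤ N * e := fun i => by
    rw [← sum_sub_distrib]; exact abs_sum_le_card_mul (hd i)
  have hsq : |∑ i, (∑ j, H i j) ^ 2 - ∑ i, (∑ j, H' i j) ^ 2| ≤ N * (2 * (N * B) * (N * e)) := by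
    rw [← sum_sub_distrib]
    exact abs_sum_le_card_mul fun i => abs_sq_sub_sq_le (hrow i) (hrow' i) (hrowd i)
  have htot : |(∑ i, ∑ j, H i j) ^ 2 - (∑ i, ∑ j, H' i j) ^ 2|
      ≤ 2 * (N * (N * B)) * (N * (N * e)) :=
    abs_sq_sub_sq_le (abs_sum_le_card_mul hrow) (abs_sum_le_card_mul hrow')
      (by rw [← sum_sub_distrib]; exact abs_sum_le_card_mul hrowd)
  set A := ∑ i, (∑ j, H i j) ^ 2
  set A' := ∑ i, (∑ j, H' i j) ^ 2
  set T := ∑ i, ∑ j, H i j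
  set T' := ∑ i, ∑ j, H' i j
  calc _ = |4 / N ^ 3 * (A - A') - 4 / N ^ 4 * (T ^ 2 - T' ^ 2)| := by ring_nf
    _ ≤ 4 / N ^ 3 * |A - A'| + 4 / N ^ 4 * |T ^ 2 - T' ^ 2| := by
        refine (abs_sub _ _).trans_eq ?_
        rw [abs_mul, abs_mul, abs_of_nonneg (by positivity : (0 : ℝ) ≤ 4 / N ^ 3),
          abs_of_nonneg (by positivity : (0 : ℝ) ≤ 4 / N ^ 4)]
    _ ≤ 4 / N ^ 3 * (N * (2 * (N * B) * (N * e)))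
          + 4 / N ^ 4 * (2 * (N * (N * B)) * (N * (N * e))) := by gcongr
    _ = 16 * B * e := by field_simp; ring

end VarianceStat

lemma sigmaHat2_eq_varianceStat_add {d n : ℕ} (lam : ℝ)
    (k : EuclideanSpace ℝ (Fin d) → EuclideanSpace ℝ (Fin d) → ℝ)
    (X Y : Fin n → EuclideanSpace ℝ (Fin d)) :
    sigmaHat2 n lam k X Y = varianceStat (fun i j => Hker k (X i) (X j) (Y i) (Y j)) + lam := by
  simp [sigmaHat2, varianceStat]

section Hker

variable {d : ℕ} {x x' y y' : EuclideanSpace ℝ (Fin d)}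

lemma Hker_sub_Hker (k k' : EuclideanSpace ℝ (Fin d) → EuclideanSpace ℝ (Fin d) → ℝ) :
    Hker k x x' y y' - Hker k' x x' y y' = Hker (fun a b => k a b - k' a b) x x' y y' := by
  simp only [Hker]; ring

lemma abs_Hker_le {s : Set (EuclideanSpace ℝ (Fin d))}
    {k : EuclideanSpace ℝ (Fin d) → EuclideanSpace ℝ (Fin d) → ℝ} {C : ℝ}
    (hk : ∀ a ∈ s, ∀ b ∈ s, |k a b| ≤ C) (hx : x ∈ s) (hx' : x' ∈ s) (hy : y ∈ s) (hy' : y' ∈ s) :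
    |Hker k x x' y y'| ≤ 4 * C := by
  have h₁ := abs_le.mp (hk x hx x' hx')
  have h₂ := abs_le.mp (hk y hy y' hy')
  have h₃ := abs_le.mp (hk x hx y' hy')
  have h₄ := abs_le.mp (hk x' hx' y hy)
  rw [Hker, abs_le]
  constructor <;> linarith

end Hker

theorem statement13_general {d κ : ℕ} (Xset : Set (EuclideanSpace ℝ (Fin d)))
    (Θ : Set (EuclideanSpace ℝ (Fin κ)))
    (k : EuclideanSpace ℝ (Fin κ) → EuclideanSpace ℝ (Fin d) → EuclideanSpace ℝ (Fin d) → ℝ)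
    (ν L₁ lam : ℝ) (hν : 0 < ν) (hL₁ : 0 < L₁)
    (hbound : ∀ θ ∈ Θ, ∀ x ∈ Xset, ∀ y ∈ Xset, |k θ x y| ≤ ν)
    (hlip : ∀ θ ∈ Θ, ∀ θ' ∈ Θ, ∀ x ∈ Xset, ∀ y ∈ Xset,
      |k θ x y - k θ' x y| ≤ L₁ * ‖θ - θ'‖)
    (n : ℕ) (X Y : Fin n → EuclideanSpace ℝ (Fin d))
    (hX : ∀ i, X i ∈ Xset) (hY : ∀ i, Y i ∈ Xset)
    (θ θ' : EuclideanSpace ℝ (Fin κ)) (hθ : θ ∈ Θ) (hθ' : θ' ∈ Θ) :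
    |sigmaHat2 n lam (k θ) X Y - sigmaHat2 n lam (k θ') X Y| ≤ 256 * L₁ * ν * ‖θ - θ'‖ := by
  have hH : ∀ φ ∈ Θ, ∀ i j, |Hker (k φ) (X i) (X j) (Y i) (Y j)| ≤ 4 * ν := fun φ hφ i j =>
    abs_Hker_le (hbound φ hφ) (hX i) (hX j) (hY i) (hY j)
  have hd : ∀ i j, |Hker (k θ) (X i) (X j) (Y i) (Y j) - Hker (k θ') (X i) (X j) (Y i) (Y j)|
      ≤ 4 * (L₁ * ‖θ - θ'‖) := fun i j => by
    rw [Hker_sub_Hker]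
    exact abs_Hker_le (hlip θ hθ θ' hθ') (hX i) (hX j) (hY i) (hY j)
  rw [sigmaHat2_eq_varianceStat_add, sigmaHat2_eq_varianceStat_add, add_sub_add_right_eq_sub]
  calc _ ≤ 16 * (4 * ν) * (4 * (L₁ * ‖θ - θ'‖)) :=
        abs_varianceStat_sub_le (by positivity) (by positivity) (hH θ hθ) (hH θ' hθ') hd
    _ = 256 * L₁ * ν * ‖θ - θ'‖ := by ring

/-- Lemma 19 of Liu et al. 2020: Lipschitz continuity of the regularized
variance estimator in the kernel parameter:
`|σ̂²_{H1,λ}(S_P, S_Q; k_θ) − σ̂²_{H1,λ}(S_P, S_Q; k_θ')| ≤ 256 L₁ ν ‖θ − θ'‖`. -/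
theorem statement13 {d κ : ℕ} (Xset : Set (EuclideanSpace ℝ (Fin d)))
    (Θ : Set (EuclideanSpace ℝ (Fin κ)))
    (k : EuclideanSpace ℝ (Fin κ) → EuclideanSpace ℝ (Fin d) → EuclideanSpace ℝ (Fin d) → ℝ)
    (ν L₁ lam : ℝ) (hν : 0 < ν) (hL₁ : 0 < L₁) (hlam : 0 < lam)
    (hbound : ∀ θ ∈ Θ, ∀ x ∈ Xset, ∀ y ∈ Xset, |k θ x y| ≤ ν)
    (hlip : ∀ θ ∈ Θ, ∀ θ' ∈ Θ, ∀ x ∈ Xset, ∀ y ∈ Xset,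
      |k θ x y - k θ' x y| ≤ L₁ * ‖θ - θ'‖)
    (n : ℕ) (X Y : Fin n → EuclideanSpace ℝ (Fin d))
    (hX : ∀ i, X i ∈ Xset) (hY : ∀ i, Y i ∈ Xset)
    (θ θ' : EuclideanSpace ℝ (Fin κ)) (hθ : θ ∈ Θ) (hθ' : θ' ∈ Θ) :
    |sigmaHat2 n lam (k θ) X Y - sigmaHat2 n lam (k θ') X Y| ≤ 256 * L₁ * ν * ‖θ - θ'‖ :=
  statement13_general Xset Θ k ν L₁ lam hν hL₁ hbound hlip n X Y hX hY θ θ' hθ hθ'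

end
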